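/- arXiv:2602.21326 — 9 statements merged into one kernel-verified Lean document; each statement's English description precedes it below -/
import Mathlib

section
/- Let L₁ and L₂ be first-order languages, A an L₁-structure, B an L₂-structure, d : ℕ → ℕ, and for each m a function f_m : (Fin m → B) → (Fin (d m) → A). Assume: (i) for every m and every ∅-definable set D ⊆ (Fin m → B), the image f_m '' D is ∅-definable in A; (ii) for every m and every quantifier-free L₁-formula φ with free variables Fin (d m), there is a quantifier-free L₂-formula ψ with free variables Fin m such that for all x : Fin m → B, ψ is realized at x if and only if φ is realized at f_m x; (iii) for every m, every a : Fin (d m) → A, and every ∅-definable set D ⊆ (Fin m → B), either f_m ⁻¹' {a} ⊆ D or f_m ⁻¹' {a} is disjoint from D. Then, if A admits quantifier elimination (every ∅-definable subset of (Fin n → A), for every n, equals the realization set of a quantifier-free L₁-formula), then B admits quantifier elimination (every ∅-definable subset of (Fin m → B), for every m, equals the realization set of a quantifier-free L₂-formula). -/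
open FirstOrder FirstOrder.Language

/-- Transfer of quantifier elimination: given structures `A`, `B` and maps
`f m : (Fin m → B) → (Fin (d m) → A)` such that (i) images of definable sets
are definable, (ii) preimages of quantifier-free definable sets are
quantifier-free definable, and (iii) fibers of `f m` are not split by definable
sets, quantifier elimination for `A` implies quantifier elimination for `B`. -/
theorem qe_transfer {L₁ L₂ : FirstOrder.Language} {A B : Type*}
    [L₁.Structure A] [L₂.Structure B]
    (d : ℕ → ℕ) (f : ∀ m : ℕ, (Fin m → B) → (Fin (d m) → A))
    (himage : ∀ (m : ℕ) (D : Set (Fin m → B)),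
      (∃ φ : L₂.Formula (Fin m), D = {x | φ.Realize x}) →
      ∃ ψ : L₁.Formula (Fin (d m)), (f m) '' D = {y | ψ.Realize y})
    (hpreimage : ∀ (m : ℕ) (φ : L₁.Formula (Fin (d m))), φ.IsQF →
      ∃ ψ : L₂.Formula (Fin m), ψ.IsQF ∧
        ∀ x : Fin m → B, (ψ.Realize x ↔ φ.Realize (f m x)))
    (hfibers : ∀ (m : ℕ) (a : Fin (d m) → A) (D : Set (Fin m → B)),
      (∃ φ : L₂.Formula (Fin m), D = {x | φ.Realize x}) →
      ((f m) ⁻¹' {a} ⊆ D ∨ Disjoint ((f m) ⁻¹' {a}) D))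
    (hA : ∀ (n : ℕ) (E : Set (Fin n → A)),
      (∃ φ : L₁.Formula (Fin n), E = {y | φ.Realize y}) →
      ∃ φ : L₁.Formula (Fin n), φ.IsQF ∧ E = {y | φ.Realize y}) :
    ∀ (m : ℕ) (D : Set (Fin m → B)),
      (∃ φ : L₂.Formula (Fin m), D = {x | φ.Realize x}) →
      ∃ ψ : L₂.Formula (Fin m), ψ.IsQF ∧ D = {x | ψ.Realize x} := by
  intro m D hD
  obtain ⟨φ₀, hφ₀⟩ := himage m D hD
  obtain ⟨φ, hφqf, hφ⟩ := hA (d m) ((f m) '' D) ⟨φ₀, hφ₀⟩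
  obtain ⟨ψ, hψqf, hψ⟩ := hpreimage m φ hφqf
  refine ⟨ψ, hψqf, Set.ext fun x => ?_⟩
  simp only [Set.mem_setOf_eq, hψ x]
  constructor
  · intro hx
    have : f m x ∈ (f m) '' D := ⟨x, hx, rfl⟩
    rwa [hφ] at this
  · intro hx
    have : f m x ∈ (f m) '' D := by rw [hφ]; exact hx
    obtain ⟨x', hx'D, hx'⟩ := this
    rcases hfibers m (f m x) D hD with h | h
    · exact h rfl
    · exact absurd hx'D (Set.disjoint_left.mp h hx')
end

section
/- Let p, q : Fin m → (Fin 3 → ℝ) be two tuples of points in ℝ³. If all pairwise dot products agree, i.e. p i ⬝ᵥ p j = q i ⬝ᵥ q j for all i, j, then there exists an orthogonal matrix A : Matrix (Fin 3) (Fin 3) ℝ (that is, Aᵀ * A = 1) such that A.mulVec (p i) = q i for all i. -/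
/-!
Equal Gram matrices make `∑ cᵢ pᵢ ↦ ∑ cᵢ qᵢ` a well-defined linear isometry from the span of
the `pᵢ` onto the span of the `qᵢ`. It extends to a linear isometry of `ℝ³`, whose matrix in the
standard (orthonormal) basis is orthogonal.
-/

open Matrix

namespace LinearMap

variable {R M N P : Type*} [Ring R] [AddCommGroup M] [Module R M] [AddCommGroup N] [Module R N]
  [AddCommGroup P] [Module R P]

noncomputable def rangeLift (f : M →ₗ[R] N) (g : M →ₗ[R] P) (h : ker f ≤ ker g) :
    range f →ₗ[R] P :=
  (ker f).liftQ g h ∘ₗ f.quotKerEquivRange.symm.toLinearMap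

@[simp]
theorem rangeLift_apply_mk (f : M →ₗ[R] N) (g : M →ₗ[R] P) (h : ker f ≤ ker g) (x : M) :
    rangeLift f g h ⟨f x, mem_range_self f x⟩ = g x := by
  simp [rangeLift]

end LinearMap

section Gram

variable {𝕜 V ι : Type*} [RCLike 𝕜] [NormedAddCommGroup V] [InnerProductSpace 𝕜 V] [Fintype ι]
  {v w : ι → V}

theorem norm_linearCombination_eq_of_gram_eq (h : gram 𝕜 v = gram 𝕜 w) (c : ι → 𝕜) :
    ‖Fintype.linearCombination 𝕜 v c‖ = ‖Fintype.linearCombination 𝕜 w c‖ := by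
  rw [@norm_eq_sqrt_re_inner 𝕜, @norm_eq_sqrt_re_inner 𝕜, Fintype.linearCombination_apply,
    Fintype.linearCombination_apply, ← star_dotProduct_gram_mulVec,
    ← star_dotProduct_gram_mulVec, h]

theorem ker_linearCombination_le_of_gram_eq (h : gram 𝕜 v = gram 𝕜 w) :
    LinearMap.ker (Fintype.linearCombination 𝕜 v) ≤ LinearMap.ker (Fintype.linearCombination 𝕜 w) :=
  fun c hc ↦ by
    rw [LinearMap.mem_ker, ← norm_eq_zero, ← norm_linearCombination_eq_of_gram_eq h,
      LinearMap.mem_ker.1 hc, norm_zero]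

theorem exists_linearIsometryEquiv_apply_eq_of_gram_eq [FiniteDimensional 𝕜 V]
    (h : gram 𝕜 v = gram 𝕜 w) : ∃ F : V ≃ₗᵢ[𝕜] V, ∀ i, F (v i) = w i := by
  classical
  let L : LinearMap.range (Fintype.linearCombination 𝕜 v) →ₗᵢ[𝕜] V :=
    { toLinearMap := LinearMap.rangeLift _ _ (ker_linearCombination_le_of_gram_eq h)
      norm_map' := by
        rintro ⟨_, c, rfl⟩
        simpa using (norm_linearCombination_eq_of_gram_eq h c).symm }
  refine ⟨L.extend.toLinearIsometryEquiv rfl, fun i ↦ ?_⟩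
  have hvi : v i = Fintype.linearCombination 𝕜 v (Pi.single i 1) := by simp
  rw [LinearIsometry.coe_toLinearIsometryEquiv, hvi,
    L.extend_apply ⟨_, LinearMap.mem_range_self _ _⟩]
  change LinearMap.rangeLift _ _ _ _ = _
  rw [LinearMap.rangeLift_apply_mk]
  simp

end Gram

theorem Matrix.toEuclideanLin_symm_mem_unitaryGroup {𝕜 n : Type*} [RCLike 𝕜] [Fintype n]
    [DecidableEq n] (F : EuclideanSpace 𝕜 n ≃ₗᵢ[𝕜] EuclideanSpace 𝕜 n) :
    toEuclideanLin.symm F.toLinearMap ∈ unitaryGroup n 𝕜 := by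
  rw [toEuclideanLin_eq_toLin_orthonormal]
  exact F.toMatrix_mem_unitaryGroup _ _

/-- If two tuples of points in `ℝ³` have the same pairwise dot products, then
there is an orthogonal matrix mapping one tuple to the other. -/
theorem exists_orthogonal_of_dotProduct_eq {m : ℕ}
    (p q : Fin m → (Fin 3 → ℝ))
    (h : ∀ i j, p i ⬝ᵥ p j = q i ⬝ᵥ q j) :
    ∃ A : Matrix (Fin 3) (Fin 3) ℝ, Aᵀ * A = 1 ∧ ∀ i, A.mulVec (p i) = q i := by
  have hgram : gram ℝ (fun i ↦ WithLp.toLp 2 (p i)) = gram ℝ (fun i ↦ WithLp.toLp 2 (q i)) := by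
    ext i j
    simpa [EuclideanSpace.inner_toLp_toLp, dotProduct_comm] using h i j
  obtain ⟨F, hF⟩ := exists_linearIsometryEquiv_apply_eq_of_gram_eq hgram
  refine ⟨toEuclideanLin.symm F.toLinearMap,
    (mem_orthogonalGroup_iff' _ _).1 (toEuclideanLin_symm_mem_unitaryGroup F), fun i ↦ ?_⟩
  calc toEuclideanLin.symm F.toLinearMap *ᵥ p i
      = WithLp.ofLp (toEuclideanLin (toEuclideanLin.symm F.toLinearMap) (WithLp.toLp 2 (p i))) :=
        rfl
    _ = q i := by rw [LinearEquiv.apply_symm_apply]; exact congrArg WithLp.ofLp (hF i)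
end

section
/- Let p, q : Fin m → (Fin 3 → ℝ) be two tuples of points in ℝ³. If all pairwise dot products agree, i.e. p i ⬝ᵥ p j = q i ⬝ᵥ q j for all i, j, and in addition all scalar triple products agree, i.e. p i ⬝ᵥ (crossProduct (p j) (p l)) = q i ⬝ᵥ (crossProduct (q j) (q l)) for all i, j, l, then there exists a special orthogonal matrix R : Matrix (Fin 3) (Fin 3) ℝ (that is, Rᵀ * R = 1 and det R = 1) such that R.mulVec (p i) = q i for all i. -/
open Matrix

/-!
Equal Gram data make `∑ cᵢ pᵢ ↦ ∑ cᵢ qᵢ` a well-defined linear isometry on the span of the `pᵢ`,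
which extends to an orthogonal matrix `R` with `R pᵢ = qᵢ`. Under `R` every triple product is
multiplied by `det R = ±1`. If `det R = -1`, equality of the triple products forces all of them to
vanish, so the `pᵢ` lie in a plane, and composing `R` with the reflection in that plane fixes the
`pᵢ` and corrects the determinant.
-/

section InnerProductSpace

variable {𝕜 E ι : Type*} [RCLike 𝕜] [NormedAddCommGroup E] [InnerProductSpace 𝕜 E]

theorem inner_linearCombination_eq_of_inner_eq {v w : ι → E}
    (h : ∀ i j, inner 𝕜 (v i) (v j) = inner 𝕜 (w i) (w j)) (c d : ι →₀ 𝕜) :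
    inner 𝕜 (Finsupp.linearCombination 𝕜 v c) (Finsupp.linearCombination 𝕜 v d) =
      inner 𝕜 (Finsupp.linearCombination 𝕜 w c) (Finsupp.linearCombination 𝕜 w d) := by
  simp [Finsupp.linearCombination_apply, Finsupp.sum_inner, Finsupp.inner_sum, inner_smul_left,
    inner_smul_right, h]

theorem exists_linearIsometry_apply_eq_of_inner_eq [FiniteDimensional 𝕜 E] {v w : ι → E}
    (h : ∀ i j, inner 𝕜 (v i) (v j) = inner 𝕜 (w i) (w j)) :
    ∃ f : E →ₗᵢ[𝕜] E, ∀ i, f (v i) = w i := by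
  set F := Finsupp.linearCombination 𝕜 v
  set G := Finsupp.linearCombination 𝕜 w
  have hFG := inner_linearCombination_eq_of_inner_eq h
  have hker : LinearMap.ker F ≤ LinearMap.ker G := fun c hc => by
    rw [LinearMap.mem_ker] at hc ⊢
    rw [← inner_self_eq_zero (𝕜 := 𝕜), ← hFG, hc, inner_zero_left]
  let L : LinearMap.range F →ₗ[𝕜] E :=
    (LinearMap.ker F).liftQ G hker ∘ₗ F.quotKerEquivRange.symm
  have hL : ∀ c, L ⟨F c, LinearMap.mem_range_self F c⟩ = G c := fun c => by
    simp [L, LinearMap.quotKerEquivRange_symm_apply_image]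
  let L' : LinearMap.range F →ₗᵢ[𝕜] E := L.isometryOfInner <| by
    rintro ⟨_, c, rfl⟩ ⟨_, d, rfl⟩
    rw [hL, hL, ← hFG]
    rfl
  refine ⟨L'.extend, fun i => ?_⟩
  have := L'.extend_apply ⟨F (Finsupp.single i 1), LinearMap.mem_range_self F _⟩
  rw [show L' _ = L _ from rfl, hL] at this
  simpa [F, G] using this

end InnerProductSpace

namespace Matrix

section Orthogonal

variable {m ι : Type*} [Fintype m] [DecidableEq m]

theorem transpose_mul_self_eq_one_of_dotProduct_mulVec {R : Matrix m m ℝ}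
    (h : ∀ x y, R *ᵥ x ⬝ᵥ R *ᵥ y = x ⬝ᵥ y) : Rᵀ * R = 1 := by
  ext i j
  simpa [mulVec_single_one, dotProduct, mul_apply, one_apply, Pi.single_apply, eq_comm] using
    h (Pi.single i 1) (Pi.single j 1)

theorem exists_orthogonal_mulVec_eq_of_dotProduct_eq {p q : ι → m → ℝ}
    (h : ∀ i j, p i ⬝ᵥ p j = q i ⬝ᵥ q j) :
    ∃ R : Matrix m m ℝ, Rᵀ * R = 1 ∧ ∀ i, R *ᵥ p i = q i := by
  obtain ⟨f, hf⟩ := exists_linearIsometry_apply_eq_of_inner_eq (𝕜 := ℝ)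
    (v := fun i => WithLp.toLp 2 (p i)) (w := fun i => WithLp.toLp 2 (q i))
    (by simpa [EuclideanSpace.inner_toLp_toLp, dotProduct_comm] using h)
  set R := toEuclideanLin.symm f.toLinearMap
  have hR : ∀ x, R *ᵥ x = WithLp.ofLp (f (WithLp.toLp 2 x)) := fun x => by
    change _ = WithLp.ofLp (f.toLinearMap _)
    rw [← toEuclideanLin.apply_symm_apply f.toLinearMap]
    rfl
  refine ⟨R, transpose_mul_self_eq_one_of_dotProduct_mulVec fun x y => ?_, fun i => ?_⟩
  · have := f.inner_map_map (WithLp.toLp 2 y) (WithLp.toLp 2 x)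
    rw [EuclideanSpace.inner_eq_star_dotProduct, EuclideanSpace.inner_eq_star_dotProduct] at this
    simpa [hR] using this
  · rw [hR, hf]

end Orthogonal

section Householder

variable {m K : Type*} [Fintype m] [DecidableEq m] [Field K]

/-- For `n ⬝ᵥ n = 0` this is the identity, since `2 / 0 = 0`. -/
def householder (n : m → K) : Matrix m m K :=
  1 - (2 / (n ⬝ᵥ n)) • vecMulVec n n

variable {n : m → K}

theorem householder_transpose_mul_self (hn : n ⬝ᵥ n ≠ 0) :
    (householder n)ᵀ * householder n = 1 := by
  have h2 : (2 / (n ⬝ᵥ n)) * (2 / (n ⬝ᵥ n)) * (n ⬝ᵥ n) = 2 * (2 / (n ⬝ᵥ n)) := by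
    field_simp
  simp only [householder, transpose_sub, transpose_one, transpose_smul, transpose_vecMulVec,
    sub_mul, mul_sub, one_mul, mul_one, smul_mul_smul, vecMulVec_mul_vecMulVec, vecMulVec_smul,
    ← smul_assoc, smul_eq_mul, h2]
  module

theorem det_householder (hn : n ⬝ᵥ n ≠ 0) : (householder n).det = -1 := by
  rw [householder, sub_eq_add_neg, ← neg_smul, ← vecMulVec_smul, vecMulVec_eq Unit,
    det_one_add_replicateCol_mul_replicateRow, smul_dotProduct, smul_eq_mul]
  field_simp
  ring

theorem householder_mulVec_of_dotProduct_eq_zero {x : m → K} (hx : n ⬝ᵥ x = 0) :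
    householder n *ᵥ x = x := by
  simp [householder, sub_mulVec, smul_mulVec, vecMulVec_mulVec, hx]

end Householder

theorem mulVec_dotProduct_cross_mulVec {R : Type*} [CommRing R] (M : Matrix (Fin 3) (Fin 3) R)
    (u v w : Fin 3 → R) :
    M *ᵥ u ⬝ᵥ (M *ᵥ v) ⨯₃ (M *ᵥ w) = M.det * (u ⬝ᵥ v ⨯₃ w) := by
  have hrows : ![M *ᵥ u, M *ᵥ v, M *ᵥ w] = of ![u, v, w] * Mᵀ := by
    ext i j
    fin_cases i <;> simp [mul_apply, mulVec, dotProduct, mul_comm]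
  rw [triple_product_eq_det, triple_product_eq_det, hrows, det_mul, det_transpose, mul_comm]
  rfl

end Matrix

section CrossProduct

variable {R : Type*} [CommRing R]

theorem exists_cross_ne_zero {u : Fin 3 → R} (hu : u ≠ 0) : ∃ v, v ⨯₃ u ≠ 0 := by
  contrapose! hu
  have h0 := congrFun (hu (Pi.single 0 1))
  have h1 := congrFun (hu (Pi.single 1 1))
  ext k
  fin_cases k
  · simpa [cross_apply] using h1 2
  · simpa [cross_apply] using h0 2
  · simpa [cross_apply] using h0 1

theorem exists_ne_zero_forall_dotProduct_eq_zero_of_tripleProduct_eq_zero [Nontrivial R]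
    {ι : Type*} (p : ι → Fin 3 → R) (h : ∀ i j l, p i ⬝ᵥ p j ⨯₃ p l = 0) :
    ∃ n ≠ 0, ∀ i, n ⬝ᵥ p i = 0 := by
  by_cases hcross : ∃ i j, p i ⨯₃ p j ≠ 0
  · obtain ⟨i, j, hij⟩ := hcross
    exact ⟨p i ⨯₃ p j, hij, fun l => by rw [dotProduct_comm, h]⟩
  push Not at hcross
  by_cases hp : ∃ i, p i ≠ 0
  · obtain ⟨i, hi⟩ := hp
    obtain ⟨v, hv⟩ := exists_cross_ne_zero hi
    refine ⟨v ⨯₃ p i, hv, fun l => ?_⟩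
    rw [dotProduct_comm, triple_product_permutation, hcross, dotProduct_zero]
  push Not at hp
  exact ⟨Pi.single 0 1, by simp, fun i => by simp [hp i]⟩

end CrossProduct

/-- If two tuples of points in `ℝ³` have the same pairwise dot products and
the same scalar triple products, then there is a special orthogonal matrix
mapping one tuple to the other. -/
theorem exists_specialOrthogonal_of_dotProduct_tripleProduct_eq {m : ℕ}
    (p q : Fin m → (Fin 3 → ℝ))
    (hdot : ∀ i j, p i ⬝ᵥ p j = q i ⬝ᵥ q j)
    (htriple : ∀ i j l, p i ⬝ᵥ (crossProduct (p j) (p l)) =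
      q i ⬝ᵥ (crossProduct (q j) (q l))) :
    ∃ R : Matrix (Fin 3) (Fin 3) ℝ, Rᵀ * R = 1 ∧ R.det = 1 ∧
      ∀ i, R.mulVec (p i) = q i := by
  obtain ⟨R, hR, hRp⟩ := exists_orthogonal_mulVec_eq_of_dotProduct_eq hdot
  have hdet : R.det * R.det = 1 := by
    simpa [det_transpose] using congrArg det hR
  rcases mul_self_eq_one_iff.mp hdet with hdet | hdet
  · exact ⟨R, hR, hdet, hRp⟩
  have hflat : ∀ i j l, p i ⬝ᵥ p j ⨯₃ p l = 0 := fun i j l => by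
    have := htriple i j l
    rw [← hRp, ← hRp, ← hRp, mulVec_dotProduct_cross_mulVec, hdet] at this
    linarith
  obtain ⟨n, hn, hnp⟩ := exists_ne_zero_forall_dotProduct_eq_zero_of_tripleProduct_eq_zero p hflat
  have hnn : n ⬝ᵥ n ≠ 0 := fun h => hn (dotProduct_self_eq_zero.mp h)
  refine ⟨R * householder n, ?_, ?_, fun i => ?_⟩
  · rw [transpose_mul, Matrix.mul_assoc, ← Matrix.mul_assoc Rᵀ, hR, Matrix.one_mul,
      householder_transpose_mul_self hnn]
  · rw [det_mul, hdet, det_householder hnn, neg_one_mul, neg_neg]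
  · rw [← mulVec_mulVec, householder_mulVec_of_dotProduct_eq_zero (hnp i), hRp]
end

section
/- Let R : Matrix (Fin 3) (Fin 3) ℝ be special orthogonal (Rᵀ * R = 1 and det R = 1). Define φ_R : ℍ → ℍ by φ_R v = ⟨v.re, u 0, u 1, u 2⟩ where u = R.mulVec (imVec v). Then φ_R is an ℝ-algebra automorphism of the quaternions: it is additive, ℝ-linear, multiplicative (φ_R (v * w) = φ_R v * φ_R w), maps 1 to 1, is bijective, and moreover commutes with conjugation (φ_R (star v) = star (φ_R v)) and preserves real parts ((φ_R v).re = v.re). -/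
open Matrix

/-- The imaginary part of a quaternion as a vector in `Fin 3 → ℝ`. -/
def imVec (q : Quaternion ℝ) : Fin 3 → ℝ := ![q.imI, q.imJ, q.imK]

/-- Rotating the imaginary part of a quaternion by a matrix `R`. -/
def rotQuat (R : Matrix (Fin 3) (Fin 3) ℝ) (v : Quaternion ℝ) : Quaternion ℝ :=
  ⟨v.re, R.mulVec (imVec v) 0, R.mulVec (imVec v) 1, R.mulVec (imVec v) 2⟩

/-! `rotQuat R` fixes real parts and acts by `R` on imaginary parts. Since `p * q` has real
part `p₀ q₀ - p⃗ ⬝ q⃗` and imaginary part `p₀ q⃗ + q₀ p⃗ + p⃗ ⨯ q⃗`, multiplicativity amounts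
to `R` preserving dot products (orthogonality) and cross products. The latter holds because
`(A u) ⨯ (A w) = (adj A)ᵀ (u ⨯ w)` for every `A`, and `adj R = Rᵀ` when `Rᵀ R = 1` and
`det R = 1`. -/

namespace Matrix

theorem mulVec_cross_mulVec {R : Type*} [CommRing R] (A : Matrix (Fin 3) (Fin 3) R)
    (u w : Fin 3 → R) : (A *ᵥ u) ⨯₃ (A *ᵥ w) = A.adjugateᵀ *ᵥ (u ⨯₃ w) := by
  ext i
  fin_cases i <;>
    simp only [Fin.zero_eta, Fin.mk_one, Fin.reduceFinMk, cross_apply, adjugate_fin_three, mulVec,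
      dotProduct, Fin.sum_univ_three, transpose_apply, of_apply, cons_val', cons_val_fin_one,
      cons_val_zero, cons_val_one, cons_val] <;> ring

theorem adjugate_eq_transpose {R : Type*} [CommRing R] {n : Type*} [Fintype n] [DecidableEq n]
    {A : Matrix n n R} (hA : Aᵀ * A = 1) (hdet : A.det = 1) : A.adjugate = Aᵀ := by
  calc A.adjugate = A.adjugate * (A * Aᵀ) := by rw [mul_eq_one_comm.mp hA, mul_one]
    _ = Aᵀ := by rw [← mul_assoc, adjugate_mul, hdet, one_smul, one_mul]

theorem mulVec_dotProduct_mulVec {R : Type*} [CommSemiring R] {n : Type*} [Fintype n]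
    [DecidableEq n] {A : Matrix n n R} (hA : Aᵀ * A = 1) (u w : n → R) :
    A *ᵥ u ⬝ᵥ A *ᵥ w = u ⬝ᵥ w := by
  rw [← vecMul_transpose, ← dotProduct_mulVec, mulVec_mulVec, hA, one_mulVec]

end Matrix

namespace Quaternion

theorem ext_re_imVec {p q : ℍ[ℝ]} (hre : p.re = q.re) (him : imVec p = imVec q) : p = q :=
  Quaternion.ext p q hre (congrFun him 0) (congrFun him 1) (congrFun him 2)

@[simp] theorem imVec_add (p q : ℍ[ℝ]) : imVec (p + q) = imVec p + imVec q := by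
  ext i; fin_cases i <;> rfl

@[simp] theorem imVec_smul (c : ℝ) (q : ℍ[ℝ]) : imVec (c • q) = c • imVec q := by
  ext i; fin_cases i <;> rfl

@[simp] theorem imVec_star (q : ℍ[ℝ]) : imVec (star q) = -imVec q := by
  ext i; fin_cases i <;> rfl

@[simp] theorem imVec_one : imVec (1 : ℍ[ℝ]) = 0 := by
  ext i; fin_cases i <;> rfl

theorem re_mul_eq_sub_dotProduct (p q : ℍ[ℝ]) :
    (p * q).re = p.re * q.re - imVec p ⬝ᵥ imVec q := by
  simp only [re_mul, imVec, dotProduct, Fin.sum_univ_three, cons_val_zero, cons_val_one, cons_val]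
  ring

theorem imVec_mul (p q : ℍ[ℝ]) :
    imVec (p * q) = p.re • imVec q + q.re • imVec p + imVec p ⨯₃ imVec q := by
  ext i
  fin_cases i <;>
    simp only [imVec, imI_mul, imJ_mul, imK_mul, cross_apply, Fin.zero_eta, Fin.mk_one,
      Fin.reduceFinMk, smul_cons, smul_eq_mul, smul_empty, add_cons, head_cons, tail_cons,
      empty_add_empty, cons_val_zero, cons_val_one, cons_val] <;> ring

end Quaternion

open Quaternion

section rotQuat

variable (R : Matrix (Fin 3) (Fin 3) ℝ)

@[simp] theorem re_rotQuat (v : ℍ[ℝ]) : (rotQuat R v).re = v.re := rfl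

@[simp] theorem imVec_rotQuat (v : ℍ[ℝ]) : imVec (rotQuat R v) = R *ᵥ imVec v := by
  ext i; fin_cases i <;> rfl

theorem rotQuat_add (v w : ℍ[ℝ]) : rotQuat R (v + w) = rotQuat R v + rotQuat R w :=
  ext_re_imVec rfl (by simp [mulVec_add])

theorem rotQuat_smul (c : ℝ) (v : ℍ[ℝ]) : rotQuat R (c • v) = c • rotQuat R v :=
  ext_re_imVec rfl (by simp [mulVec_smul])

theorem rotQuat_star (v : ℍ[ℝ]) : rotQuat R (star v) = star (rotQuat R v) :=
  ext_re_imVec (by simp) (by simp [mulVec_neg])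

theorem rotQuat_apply_one : rotQuat R 1 = 1 :=
  ext_re_imVec rfl (by simp)

theorem rotQuat_rotQuat (S : Matrix (Fin 3) (Fin 3) ℝ) (v : ℍ[ℝ]) :
    rotQuat R (rotQuat S v) = rotQuat (R * S) v :=
  ext_re_imVec rfl (by simp [mulVec_mulVec])

theorem rotQuat_one (v : ℍ[ℝ]) : rotQuat 1 v = v :=
  ext_re_imVec rfl (by simp)

variable {R}

theorem rotQuat_bijective (hR : Rᵀ * R = 1) : Function.Bijective (rotQuat R) :=
  Function.bijective_iff_has_inverse.mpr ⟨rotQuat Rᵀ,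
    fun v => by rw [rotQuat_rotQuat, hR, rotQuat_one],
    fun v => by rw [rotQuat_rotQuat, mul_eq_one_comm.mp hR, rotQuat_one]⟩

theorem rotQuat_mul (hR : Rᵀ * R = 1) (hdet : R.det = 1) (v w : ℍ[ℝ]) :
    rotQuat R (v * w) = rotQuat R v * rotQuat R w := by
  refine ext_re_imVec ?_ ?_
  · simp only [re_rotQuat, re_mul_eq_sub_dotProduct, imVec_rotQuat, mulVec_dotProduct_mulVec hR]
  · simp only [imVec_rotQuat, imVec_mul, re_rotQuat, mulVec_cross_mulVec,
      adjugate_eq_transpose hR hdet, transpose_transpose, mulVec_add, mulVec_smul]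

end rotQuat

/-- For a special orthogonal matrix `R`, the map `φ_R` rotating the imaginary
part of a quaternion by `R` is an ℝ-algebra automorphism of the quaternions
which commutes with conjugation and preserves real parts. -/
theorem rotQuat_isAlgebraAutomorphism (R : Matrix (Fin 3) (Fin 3) ℝ)
    (hR : Rᵀ * R = 1) (hdet : R.det = 1) :
    (∀ v w : Quaternion ℝ, rotQuat R (v + w) = rotQuat R v + rotQuat R w) ∧
    (∀ (c : ℝ) (v : Quaternion ℝ), rotQuat R (c • v) = c • rotQuat R v) ∧
    (∀ v w : Quaternion ℝ, rotQuat R (v * w) = rotQuat R v * rotQuat R w) ∧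
    rotQuat R 1 = 1 ∧
    Function.Bijective (rotQuat R) ∧
    (∀ v : Quaternion ℝ, rotQuat R (star v) = star (rotQuat R v)) ∧
    (∀ v : Quaternion ℝ, (rotQuat R v).re = v.re) :=
  ⟨rotQuat_add R, rotQuat_smul R, rotQuat_mul hR hdet, rotQuat_apply_one R,
    rotQuat_bijective hR, rotQuat_star R, re_rotQuat R⟩
end

section
/- Every ℝ-algebra automorphism of the quaternions is induced by a rotation of the imaginary part: for every φ : ℍ ≃ₐ[ℝ] ℍ there exists a special orthogonal matrix R : Matrix (Fin 3) (Fin 3) ℝ (Rᵀ * R = 1 and det R = 1) such that for all v ∈ ℍ, φ v = ⟨v.re, u 0, u 1, u 2⟩ where u = R.mulVec (imVec v). In other words, the automorphism group of ℍ(ℝ) as an ℝ-algebra is isomorphic to SO₃(ℝ) acting on imaginary parts. -/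
/-!
An algebra automorphism `φ` of `ℍ` is determined by the images `p, q` of `i, j`, and `φ k = p q`.
Since `p² = q² = -1`, both are unit pure quaternions; since `pq = φ k` is pure as well, they are
orthogonal, and for pure quaternions `pq` has imaginary part the cross product of those of `p`
and `q`. Thus the images of `i, j, k` form a positively oriented orthonormal frame.
-/

open Matrix

open Quaternion

theorem cross_dot_cross_self_of_orthonormal {K : Type*} [CommRing K] {a b : Fin 3 → K}
    (ha : a ⬝ᵥ a = 1) (hb : b ⬝ᵥ b = 1) (hab : a ⬝ᵥ b = 0) : a ⨯₃ b ⬝ᵥ a ⨯₃ b = 1 := by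
  rw [cross_dot_cross, ha, hb, dotProduct_comm b a, hab]
  ring

namespace Matrix

variable {K : Type*} [CommRing K] {a b : Fin 3 → K}

theorem of_cross_mul_transpose_eq_one (ha : a ⬝ᵥ a = 1) (hb : b ⬝ᵥ b = 1) (hab : a ⬝ᵥ b = 0) :
    of ![a, b, a ⨯₃ b] * (of ![a, b, a ⨯₃ b])ᵀ = 1 := by
  have hc := cross_dot_cross_self_of_orthonormal ha hb hab
  have hrow : ∀ m, of ![a, b, a ⨯₃ b] m = ![a, b, a ⨯₃ b] m := fun _ => rfl
  ext m n
  rw [mul_apply', one_apply]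
  fin_cases m <;> fin_cases n <;>
    simp [hrow, ha, hb, hc, hab, dotProduct_comm b a, dotProduct_comm (a ⨯₃ b), dot_self_cross,
      dot_cross_self]

theorem det_of_cross_eq_one (ha : a ⬝ᵥ a = 1) (hb : b ⬝ᵥ b = 1) (hab : a ⬝ᵥ b = 0) :
    (of ![a, b, a ⨯₃ b]).det = 1 := by
  rw [← cross_dot_cross_self_of_orthonormal ha hb hab, triple_product_permutation,
    triple_product_eq_det]
  rfl

end Matrix

namespace Quaternion

variable {x y : ℍ[ℝ]}

theorem re_eq_zero_of_mul_self_eq_neg_one (h : x * x = -1) : x.re = 0 := by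
  have hn : normSq x = 1 := by
    rw [← pow_eq_one_iff_of_nonneg (normSq_nonneg (a := x)) two_ne_zero, sq, ← map_mul, h,
      normSq_neg, map_one]
  rw [← sq_eq_neg_normSq, hn, sq, h, coe_one]

theorem re_mul_of_re_eq_zero (hx : x.re = 0) (hy : y.re = 0) :
    (x * y).re = -(imVec x ⬝ᵥ imVec y) := by
  simp only [re_mul, hx, hy, imVec, dotProduct, Fin.sum_univ_three, cons_val_zero, cons_val_one,
    cons_val]
  ring

theorem imVec_mul_of_re_eq_zero (hx : x.re = 0) (hy : y.re = 0) :
    imVec (x * y) = imVec x ⨯₃ imVec y := by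
  simp only [imVec, cross_apply, imI_mul, imJ_mul, imK_mul, hx, hy, cons_val]
  ring_nf

theorem imVec_dot_self_of_mul_self_eq_neg_one (h : x * x = -1) : imVec x ⬝ᵥ imVec x = 1 := by
  have hre := re_mul_of_re_eq_zero (re_eq_zero_of_mul_self_eq_neg_one h)
    (re_eq_zero_of_mul_self_eq_neg_one h)
  rw [h] at hre
  simpa using hre.symm

end Quaternion

namespace QuaternionAlgebra.Basis

theorem liftHom_self_compHom {R A : Type*} [CommRing R] [Ring A] [Algebra R A] {c₁ c₂ c₃ : R}
    (F : ℍ[R,c₁,c₂,c₃] →ₐ[R] A) : ((Basis.self R).compHom F).liftHom = F :=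
  QuaternionAlgebra.lift.apply_symm_apply F

variable (B : Basis ℍ[ℝ] (-1 : ℝ) 0 (-1))

theorem i_mul_i_eq_neg_one : B.i * B.i = -1 := by simp [B.i_mul_i]

theorem j_mul_j_eq_neg_one : B.j * B.j = -1 := by simp [B.j_mul_j]

theorem k_mul_k_eq_neg_one : B.k * B.k = -1 := by simp [B.k_mul_k]

theorem liftHom_apply_eq_mk (hi : B.i.re = 0) (hj : B.j.re = 0) (hk : B.k.re = 0) (v : ℍ[ℝ]) :
    B.liftHom v = ⟨v.re, ((of ![imVec B.i, imVec B.j, imVec B.k])ᵀ *ᵥ imVec v) 0,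
      ((of ![imVec B.i, imVec B.j, imVec B.k])ᵀ *ᵥ imVec v) 1,
      ((of ![imVec B.i, imVec B.j, imVec B.k])ᵀ *ᵥ imVec v) 2⟩ := by
  -- `ℍ[ℝ]` is `ℍ[ℝ,-1,0,-1]` only up to unfolding `Quaternion`, so `liftHom_apply` does not fire.
  change B.lift v = _
  unfold Basis.lift
  ext <;>
    simp only [algebraMap_def, Quaternion.re_add, Quaternion.imI_add, Quaternion.imJ_add,
      Quaternion.imK_add, Quaternion.re_coe, Quaternion.imI_coe, Quaternion.imJ_coe,
      Quaternion.imK_coe, Quaternion.re_smul, Quaternion.imI_smul, Quaternion.imJ_smul,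
      Quaternion.imK_smul, smul_eq_mul, hi, hj, hk, mulVec, dotProduct,
      imVec, transpose_apply, of_apply, cons_val', cons_val_zero, cons_val_one, cons_val_fin_one,
      cons_val, Fin.sum_univ_three] <;>
    ring

theorem exists_rotation_liftHom_eq :
    ∃ R : Matrix (Fin 3) (Fin 3) ℝ, Rᵀ * R = 1 ∧ R.det = 1 ∧
      ∀ v : ℍ[ℝ], B.liftHom v = ⟨v.re, (R *ᵥ imVec v) 0, (R *ᵥ imVec v) 1, (R *ᵥ imVec v) 2⟩ := by
  have hi := re_eq_zero_of_mul_self_eq_neg_one B.i_mul_i_eq_neg_one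
  have hj := re_eq_zero_of_mul_self_eq_neg_one B.j_mul_j_eq_neg_one
  have hk := re_eq_zero_of_mul_self_eq_neg_one B.k_mul_k_eq_neg_one
  have ha := imVec_dot_self_of_mul_self_eq_neg_one B.i_mul_i_eq_neg_one
  have hb := imVec_dot_self_of_mul_self_eq_neg_one B.j_mul_j_eq_neg_one
  have hab : imVec B.i ⬝ᵥ imVec B.j = 0 := by
    rw [← neg_eq_zero, ← re_mul_of_re_eq_zero hi hj, B.i_mul_j, hk]
  have hcross : imVec B.k = imVec B.i ⨯₃ imVec B.j := by
    rw [← B.i_mul_j, imVec_mul_of_re_eq_zero hi hj]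
  refine ⟨(of ![imVec B.i, imVec B.j, imVec B.k])ᵀ, ?_, ?_, B.liftHom_apply_eq_mk hi hj hk⟩
  · rw [transpose_transpose, hcross]
    exact of_cross_mul_transpose_eq_one ha hb hab
  · rw [det_transpose, hcross]
    exact det_of_cross_eq_one ha hb hab

end QuaternionAlgebra.Basis

/-- Every ℝ-algebra automorphism of the quaternions is induced by a rotation of
the imaginary part: it is given by a special orthogonal matrix acting on the
imaginary parts while preserving the real part. -/
theorem algebraAut_quaternion_eq_rotation (φ : Quaternion ℝ ≃ₐ[ℝ] Quaternion ℝ) :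
    ∃ R : Matrix (Fin 3) (Fin 3) ℝ, Rᵀ * R = 1 ∧ R.det = 1 ∧
      ∀ v : Quaternion ℝ,
        φ v = ⟨v.re, R.mulVec (imVec v) 0, R.mulVec (imVec v) 1,
                R.mulVec (imVec v) 2⟩ := by
  obtain ⟨R, hR, hdet, hφ⟩ :=
    ((QuaternionAlgebra.Basis.self ℝ).compHom (φ : ℍ[ℝ] →ₐ[ℝ] ℍ[ℝ])).exists_rotation_liftHom_eq
  refine ⟨R, hR, hdet, fun v => ?_⟩
  rw [← hφ]
  exact congr($(QuaternionAlgebra.Basis.liftHom_self_compHom (φ : ℍ[ℝ] →ₐ[ℝ] ℍ[ℝ])) v).symm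
end

section
/- Complete invariants for the diagonal SO₃-action on tuples of real quaternions: let v, w : Fin m → ℍ. Then the following are equivalent: (1) (v i).re = (w i).re for all i, and ((v i − star (v i)) * (v j − star (v j))).re = ((w i − star (w i)) * (w j − star (w j))).re for all i, j, and ((v i − star (v i)) * (v j − star (v j)) * (v l − star (v l))).re = ((w i − star (w i)) * (w j − star (w j)) * (w l − star (w l))).re for all i, j, l; (2) there exists a special orthogonal matrix R : Matrix (Fin 3) (Fin 3) ℝ (Rᵀ * R = 1, det R = 1) such that for all i, (w i).re = (v i).re and R.mulVec (imVec (v i)) = imVec (w i). -/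
open Matrix

/-!
Since `q - star q = 2 • im q`, the invariants are `-4` times the dot products of the imaginary
parts and `-8` times the determinants of triples of imaginary parts. Equal dot products give an
orthogonal map carrying one family of imaginary parts to the other. If the family spans `ℝ³`,
equal determinants force this map to have determinant `1`; otherwise it can be composed with the
reflection in a plane containing the family.
-/

open Module Submodule Set RealInnerProductSpace

theorem AlternatingMap.ext_of_span_range_eq_top {K E N ι κ : Type*} [Field K]
    [AddCommGroup E] [Module K E] [AddCommGroup N] [Module K N] [Finite ι]
    {A B : E [⋀^ι]→ₗ[K] N} {x : κ → E}
    (hx : span K (range x) = ⊤) (h : ∀ k : ι → κ, A (x ∘ k) = B (x ∘ k)) : A = B := by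
  let e := Basis.ofSpan hx.ge
  choose a ha using fun j => Basis.ofSpan_subset hx.ge (mem_range_self j)
  refine Basis.ext_alternating e fun v _ => ?_
  simpa [e, Function.comp_def, ha] using h (a ∘ v)

section InnerProductSpace

variable {E : Type*} [NormedAddCommGroup E] [InnerProductSpace ℝ E]

theorem LinearMap.exists_linearIsometry_range_apply_eq {V : Type*} [AddCommGroup V]
    [Module ℝ V] {φ ψ : V →ₗ[ℝ] E} (h : ∀ c d, ⟪ψ c, ψ d⟫ = ⟪φ c, φ d⟫) :
    ∃ L : range φ →ₗᵢ[ℝ] E, ∀ c, L ⟨φ c, mem_range_self φ c⟩ = ψ c := by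
  have hker : ker φ ≤ ker ψ := fun c hc => by
    rw [mem_ker] at hc ⊢
    rw [← inner_self_eq_zero (𝕜 := ℝ), h, hc, inner_zero_left]
  let g : range φ →ₗ[ℝ] E := (ker φ).liftQ ψ hker ∘ₗ φ.quotKerEquivRange.symm
  have hg : ∀ c, g ⟨φ c, mem_range_self φ c⟩ = ψ c := fun c => by
    simp [g, quotKerEquivRange_symm_apply_image]
  refine ⟨g.isometryOfInner ?_, hg⟩
  rintro ⟨_, c, rfl⟩ ⟨_, d, rfl⟩
  simp [hg, h]

variable [FiniteDimensional ℝ E]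

theorem exists_linearIsometryEquiv_apply_eq_of_inner_eq {κ : Type*} [Fintype κ] {x y : κ → E}
    (h : ∀ i j, ⟪x i, x j⟫ = ⟪y i, y j⟫) : ∃ f : E ≃ₗᵢ[ℝ] E, ∀ i, f (x i) = y i := by
  classical
  obtain ⟨L, hL⟩ := LinearMap.exists_linearIsometry_range_apply_eq
    (φ := Fintype.linearCombination ℝ x) (ψ := Fintype.linearCombination ℝ y) fun c d => by
      simp [Fintype.linearCombination_apply, sum_inner, inner_sum, real_inner_smul_left,
        real_inner_smul_right, h]
  refine ⟨L.extend.toLinearIsometryEquiv rfl, fun i => ?_⟩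
  simpa using L.extend_apply ⟨_, LinearMap.mem_range_self _ (Pi.single i 1)⟩ |>.trans (hL _)

theorem LinearIsometryEquiv.det_eq_one_or_eq_neg_one (f : E ≃ₗᵢ[ℝ] E) :
    LinearMap.det (f.toLinearEquiv : E →ₗ[ℝ] E) = 1 ∨
      LinearMap.det (f.toLinearEquiv : E →ₗ[ℝ] E) = -1 := by
  rw [← abs_eq zero_le_one, ← LinearMap.normDet_eq_abs_det]
  exact f.toLinearIsometry.normDet_eq_one

theorem exists_linearIsometryEquiv_det_eq_one_apply_eq {ι κ : Type*} [Fintype ι]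
    [DecidableEq ι] [Fintype κ] (b : Basis ι ℝ E) {x y : κ → E}
    (hinner : ∀ i j, ⟪x i, x j⟫ = ⟪y i, y j⟫) (hdet : ∀ k : ι → κ, b.det (x ∘ k) = b.det (y ∘ k)) :
    ∃ f : E ≃ₗᵢ[ℝ] E, LinearMap.det (f.toLinearEquiv : E →ₗ[ℝ] E) = 1 ∧
      ∀ i, f (x i) = y i := by
  obtain ⟨f, hf⟩ := exists_linearIsometryEquiv_apply_eq_of_inner_eq hinner
  by_cases hspan : span ℝ (range x) = ⊤
  · refine ⟨f, ?_, hf⟩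
    have hcomp : b.det.compLinearMap (f.toLinearEquiv : E →ₗ[ℝ] E) = b.det :=
      AlternatingMap.ext_of_span_range_eq_top hspan fun k => by
        simpa [Function.comp_def, hf] using (hdet k).symm
    have := congr($hcomp b)
    rwa [AlternatingMap.compLinearMap_apply, ← Function.comp_def, Basis.det_comp, b.det_self,
      mul_one] at this
  obtain ⟨u, hu, hu0⟩ : ∃ u ∈ (span ℝ (range x))ᗮ, u ≠ 0 :=
    (Submodule.ne_bot_iff _).mp (by rwa [Ne, orthogonal_eq_bot_iff])
  let r := (ℝ ∙ u)ᗮ.reflection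
  have hr : ∀ i, r (x i) = x i := fun i => reflection_mem_subspace_eq_self <|
    mem_orthogonal_singleton_iff_inner_right.mpr <|
      inner_left_of_mem_orthogonal (subset_span (mem_range_self i)) hu
  have hrdet : LinearMap.det (r.toLinearEquiv : E →ₗ[ℝ] E) = -1 := by
    rw [det_reflection, orthogonal_orthogonal, finrank_span_singleton hu0, pow_one]
  rcases f.det_eq_one_or_eq_neg_one with hfdet | hfdet
  · exact ⟨f, hfdet, hf⟩
  · refine ⟨r.trans f, ?_, fun i => by simp [hr, hf]⟩
    rw [LinearIsometryEquiv.toLinearEquiv_trans, LinearEquiv.coe_trans, LinearMap.det_comp,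
      hfdet, hrdet]
    norm_num

end InnerProductSpace

namespace Matrix

variable {n α : Type*} [Fintype n] [DecidableEq n]

theorem mulVec_dotProduct_mulVec_of_transpose_mul_self [CommSemiring α] {R : Matrix n n α}
    (hR : Rᵀ * R = 1) (a b : n → α) : R *ᵥ a ⬝ᵥ R *ᵥ b = a ⬝ᵥ b := by
  rw [dotProduct_mulVec, ← mulVec_transpose, mulVec_mulVec, hR, one_mulVec]

theorem det_of_mulVec [CommRing α] (R : Matrix n n α) (x : n → n → α) :
    (of fun i => R *ᵥ x i).det = R.det * (of x).det := by
  have : (of fun i => R *ᵥ x i) = of x * Rᵀ := by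
    ext i j
    simp [mul_apply, mulVec, dotProduct, mul_comm]
  rw [this, det_mul, det_transpose, mul_comm]

theorem exists_transpose_mul_self_eq_one_of_linearIsometryEquiv
    (f : EuclideanSpace ℝ n ≃ₗᵢ[ℝ] EuclideanSpace ℝ n) :
    ∃ R : Matrix n n ℝ, Rᵀ * R = 1 ∧
      R.det = LinearMap.det (f.toLinearEquiv : EuclideanSpace ℝ n →ₗ[ℝ] EuclideanSpace ℝ n) ∧
      ∀ a, R *ᵥ a = WithLp.ofLp (f (WithLp.toLp 2 a)) := by
  let B := EuclideanSpace.basisFun n ℝ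
  refine ⟨LinearMap.toMatrix B.toBasis B.toBasis f.toLinearEquiv, ?_,
    LinearMap.det_toMatrix B.toBasis _, fun a => ?_⟩
  · have := mem_unitaryGroup_iff'.mp (f.toMatrix_mem_unitaryGroup B B)
    rwa [star_eq_conjTranspose, conjTranspose_eq_transpose_of_trivial] at this
  · have hB : ∀ x, ⇑(B.toBasis.repr x) = WithLp.ofLp x := fun _ => rfl
    simpa [hB] using LinearMap.toMatrix_mulVec_repr B.toBasis B.toBasis f.toLinearEquiv
      (WithLp.toLp 2 a)

theorem exists_transpose_mul_self_eq_one_det_eq_one_mulVec_eq {κ : Type*} [Fintype κ]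
    {x y : κ → n → ℝ} (hdot : ∀ i j, x i ⬝ᵥ x j = y i ⬝ᵥ y j)
    (hdet : ∀ k : n → κ, (of (x ∘ k)).det = (of (y ∘ k)).det) :
    ∃ R : Matrix n n ℝ, Rᵀ * R = 1 ∧ R.det = 1 ∧ ∀ i, R *ᵥ x i = y i := by
  let B := (EuclideanSpace.basisFun n ℝ).toBasis
  have hBdet (z : n → n → ℝ) : B.det (fun i => WithLp.toLp 2 (z i)) = (of z).det := by
    rw [Basis.det_apply, ← det_transpose]
    rfl
  obtain ⟨f, hfdet, hf⟩ := exists_linearIsometryEquiv_det_eq_one_apply_eq B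
    (x := fun i => WithLp.toLp 2 (x i)) (y := fun i => WithLp.toLp 2 (y i))
    (fun i j => by
      simpa [EuclideanSpace.inner_eq_star_dotProduct, dotProduct_comm] using hdot i j)
    (fun k => by simpa [Function.comp_def, hBdet] using hdet k)
  obtain ⟨R, hR, hRdet, hRf⟩ := exists_transpose_mul_self_eq_one_of_linearIsometryEquiv f
  exact ⟨R, hR, hRdet.trans hfdet, fun i => by rw [hRf, hf]⟩

end Matrix

namespace Quaternion

theorem re_sub_star_mul_sub_star (a b : Quaternion ℝ) :
    ((a - star a) * (b - star b)).re = -4 * (imVec a ⬝ᵥ imVec b) := by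
  simp only [re_mul, re_sub, imI_sub, imJ_sub, imK_sub, re_star, imI_star, imJ_star, imK_star,
    imVec, dotProduct, Fin.sum_univ_three, cons_val_zero, cons_val_one, cons_val]
  ring

theorem re_sub_star_mul_sub_star_mul_sub_star (a : Fin 3 → Quaternion ℝ) :
    ((a 0 - star (a 0)) * (a 1 - star (a 1)) * (a 2 - star (a 2))).re
      = -8 * (of fun i => imVec (a i)).det := by
  simp only [re_mul, imI_mul, imJ_mul, imK_mul, re_sub, imI_sub, imJ_sub, imK_sub, re_star,
    imI_star, imJ_star, imK_star, imVec, det_fin_three, of_apply, cons_val_zero, cons_val_one,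
    cons_val]
  ring

end Quaternion

/-- Complete invariants for the diagonal `SO₃`-action on tuples of real
quaternions: two tuples have the same invariants `L₁, L₂, L₃` iff a single
special orthogonal matrix transforms the imaginary parts of one tuple into
those of the other, while the real parts agree. -/
theorem quaternion_complete_invariants {m : ℕ} (v w : Fin m → Quaternion ℝ) :
    ((∀ i, (v i).re = (w i).re) ∧
     (∀ i j, ((v i - star (v i)) * (v j - star (v j))).re =
        ((w i - star (w i)) * (w j - star (w j))).re) ∧
     (∀ i j l, ((v i - star (v i)) * (v j - star (v j)) * (v l - star (v l))).re =
        ((w i - star (w i)) * (w j - star (w j)) * (w l - star (w l))).re))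
    ↔
    ∃ R : Matrix (Fin 3) (Fin 3) ℝ, Rᵀ * R = 1 ∧ R.det = 1 ∧
      ∀ i, (w i).re = (v i).re ∧ R.mulVec (imVec (v i)) = imVec (w i) := by
  constructor
  · rintro ⟨hre, hpair, htriple⟩
    obtain ⟨R, hR, hRdet, hRv⟩ := exists_transpose_mul_self_eq_one_det_eq_one_mulVec_eq
      (x := fun i => imVec (v i)) (y := fun i => imVec (w i))
      (fun i j => mul_left_cancel₀ (by norm_num : (-4 : ℝ) ≠ 0) <|
        (Quaternion.re_sub_star_mul_sub_star ..).symm.trans <|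
          (hpair i j).trans (Quaternion.re_sub_star_mul_sub_star ..))
      (fun k => mul_left_cancel₀ (by norm_num : (-8 : ℝ) ≠ 0) <|
        (Quaternion.re_sub_star_mul_sub_star_mul_sub_star (v ∘ k)).symm.trans <|
          (htriple (k 0) (k 1) (k 2)).trans
            (Quaternion.re_sub_star_mul_sub_star_mul_sub_star (w ∘ k)))
    exact ⟨R, hR, hRdet, fun i => ⟨(hre i).symm, hRv i⟩⟩
  · rintro ⟨R, hR, hRdet, hRvw⟩
    refine ⟨fun i => (hRvw i).1.symm, fun i j => ?_, fun i j l => ?_⟩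
    · rw [Quaternion.re_sub_star_mul_sub_star, Quaternion.re_sub_star_mul_sub_star,
        ← (hRvw i).2, ← (hRvw j).2, mulVec_dotProduct_mulVec_of_transpose_mul_self hR]
    · have hw : (fun a => imVec (![w i, w j, w l] a)) =
          fun a => R *ᵥ imVec (![v i, v j, v l] a) := by
        funext a
        fin_cases a <;> simp [hRvw]
      refine (Quaternion.re_sub_star_mul_sub_star_mul_sub_star ![v i, v j, v l]).trans ?_
        |>.trans (Quaternion.re_sub_star_mul_sub_star_mul_sub_star ![w i, w j, w l]).symm
      rw [hw, det_of_mulVec, hRdet, one_mul]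
end

section
/- Invariant polynomials of a finite linear group separate orbits over an algebraically closed field: let k be an algebraically closed field of characteristic 0, n a natural number, and G a finite subgroup of the general linear group GL (Fin n) k. Then for all v, w : Fin n → k, the following are equivalent: (1) for every polynomial P : MvPolynomial (Fin n) k that is G-invariant (i.e. for all g ∈ G and all x : Fin n → k, eval ((g : Matrix (Fin n) (Fin n) k).mulVec x) P = eval x P), one has eval v P = eval w P; (2) there exists g ∈ G with (g : Matrix (Fin n) (Fin n) k).mulVec v = w. -/
open Matrix MvPolynomial

private lemma exists_indicator {k : Type*} [Field k] {n : ℕ} (p : Fin n → k)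
    (S : Finset (Fin n → k)) (hp : p ∉ S) :
    ∃ P : MvPolynomial (Fin n) k, eval p P = 1 ∧ ∀ q ∈ S, eval q P = 0 := by
  classical
  induction S using Finset.induction with
  | empty => exact ⟨1, by simp, by simp⟩
  | @insert q S hq ih =>
    obtain ⟨P, hP1, hP0⟩ := ih (fun h => hp (Finset.mem_insert_of_mem h))
    have hpq : p ≠ q := fun h => hp (h ▸ Finset.mem_insert_self q S)
    obtain ⟨i, hi⟩ := Function.ne_iff.mp hpq
    refine ⟨P * (C (p i - q i)⁻¹ * (X i - C (q i))), ?_, ?_⟩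
    · simp [hP1, inv_mul_cancel₀ (sub_ne_zero.mpr hi)]
    · intro r hr
      rcases Finset.mem_insert.mp hr with rfl | hr
      · simp
      · simp [hP0 r hr]

private lemma exists_separating {k : Type*} [Field k] {n : ℕ}
    (A B : Finset (Fin n → k)) (hAB : ∀ a ∈ A, a ∉ B) :
    ∃ P : MvPolynomial (Fin n) k,
      (∀ a ∈ A, eval a P = 0) ∧ ∀ b ∈ B, eval b P = 1 := by
  classical
  choose I hI1 hI0 using fun (b : Fin n → k) (hb : b ∈ B) =>
    exists_indicator b ((A ∪ B).erase b) (Finset.notMem_erase b _)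
  refine ⟨∑ b ∈ B.attach, I b b.2, ?_, ?_⟩
  · intro a ha
    rw [map_sum]
    refine Finset.sum_eq_zero fun b _ => ?_
    exact hI0 b b.2 a (Finset.mem_erase.mpr
      ⟨fun h => hAB a ha (h ▸ b.2), Finset.mem_union_left _ ha⟩)
  · intro b hb
    rw [map_sum, Finset.sum_eq_single_of_mem (⟨b, hb⟩ : {x // x ∈ B})
      (Finset.mem_attach _ _)]
    · exact hI1 b hb
    · intro c _ hc
      refine hI0 c c.2 b (Finset.mem_erase.mpr ⟨?_, Finset.mem_union_right _ hb⟩)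
      exact fun h => hc (Subtype.ext h.symm)

private lemma eval_bind₁_mulVec {k : Type*} [CommRing k] {n : ℕ}
    (x : Fin n → k) (M : Matrix (Fin n) (Fin n) k) (P : MvPolynomial (Fin n) k) :
    eval x (bind₁ (fun i => ∑ j, C (M i j) * X j) P) = eval (M.mulVec x) P := by
  have h1 : (eval x : MvPolynomial (Fin n) k → k) = aeval x := by
    rw [← coe_aeval_eq_eval]; rfl
  have h2 : (eval (M.mulVec x) : MvPolynomial (Fin n) k → k) = aeval (M.mulVec x) := by
    rw [← coe_aeval_eq_eval]; rfl
  rw [h1, h2, aeval_bind₁]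
  have h3 : (fun i => aeval x (∑ j, C (M i j) * X j)) = M.mulVec x := by
    funext i
    simp [Matrix.mulVec, dotProduct]
  rw [h3]

/-- Over an algebraically closed field of characteristic `0`, the invariant
polynomials of a finite linear group separate orbits: two vectors have the
same value under every `G`-invariant polynomial iff they lie in the same
`G`-orbit. -/
theorem finite_group_invariants_separate_orbits {k : Type*} [Field k]
    [IsAlgClosed k] [CharZero k] {n : ℕ}
    (G : Subgroup (GL (Fin n) k)) [Finite G] (v w : Fin n → k) :
    (∀ P : MvPolynomial (Fin n) k,
      (∀ g ∈ G, ∀ x : Fin n → k,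
        eval ((g : Matrix (Fin n) (Fin n) k).mulVec x) P = eval x P) →
      eval v P = eval w P)
    ↔ ∃ g ∈ G, (g : Matrix (Fin n) (Fin n) k).mulVec v = w := by
  classical
  have := Fintype.ofFinite G
  constructor
  · intro hinv
    by_contra hne
    push_neg at hne
    -- the two (finite) orbits
    set ov : G → (Fin n → k) := fun g => ((g : GL (Fin n) k) : Matrix (Fin n) (Fin n) k).mulVec v with hov
    set ow : G → (Fin n → k) := fun g => ((g : GL (Fin n) k) : Matrix (Fin n) (Fin n) k).mulVec w with how
    set A : Finset (Fin n → k) := Finset.image ov Finset.univ with hA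
    set B : Finset (Fin n → k) := Finset.image ow Finset.univ with hB
    have hAB : ∀ a ∈ A, a ∉ B := by
      intro a ha hb
      obtain ⟨g, _, hg⟩ := Finset.mem_image.mp ha
      obtain ⟨h, _, hh⟩ := Finset.mem_image.mp hb
      apply hne ((h⁻¹ * g : G) : GL (Fin n) k) (h⁻¹ * g : G).2
      have : ((h⁻¹ * g : G) : GL (Fin n) k) = (h : GL (Fin n) k)⁻¹ * g := rfl
      rw [this]
      have hw : (((h : GL (Fin n) k)⁻¹ : GL (Fin n) k) : Matrix (Fin n) (Fin n) k).mulVec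
          (ow h) = w := by
        show (((h : GL (Fin n) k)⁻¹ : GL (Fin n) k) : Matrix (Fin n) (Fin n) k).mulVec
          (((h : GL (Fin n) k) : Matrix (Fin n) (Fin n) k).mulVec w) = w
        rw [Matrix.mulVec_mulVec, ← Units.val_mul, inv_mul_cancel, Units.val_one,
          Matrix.one_mulVec]
      calc (((h : GL (Fin n) k)⁻¹ * (g : GL (Fin n) k) : GL (Fin n) k) :
              Matrix (Fin n) (Fin n) k).mulVec v
          = (((h : GL (Fin n) k)⁻¹ : GL (Fin n) k) : Matrix (Fin n) (Fin n) k).mulVec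
              (ov g) := by rw [Units.val_mul, ← Matrix.mulVec_mulVec]
        _ = w := by rw [hg, ← hh, hw]
    obtain ⟨P, hPA, hPB⟩ := exists_separating A B hAB
    -- average over the group
    set Q : MvPolynomial (Fin n) k :=
      C ((Fintype.card G : k)⁻¹) *
        ∑ g : G, bind₁ (fun i => ∑ j,
          C (((g : GL (Fin n) k) : Matrix (Fin n) (Fin n) k) i j) * X j) P with hQ
    have hevalQ : ∀ x : Fin n → k,
        eval x Q = (Fintype.card G : k)⁻¹ *
          ∑ g : G, eval (((g : GL (Fin n) k) : Matrix (Fin n) (Fin n) k).mulVec x) P := by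
      intro x
      rw [hQ, _root_.map_mul, eval_C, map_sum]
      congr 1
      exact Finset.sum_congr rfl fun g _ => eval_bind₁_mulVec x _ P
    have hQinv : ∀ g ∈ G, ∀ x : Fin n → k,
        eval ((g : Matrix (Fin n) (Fin n) k).mulVec x) Q = eval x Q := by
      intro g hg x
      rw [hevalQ, hevalQ]
      congr 1
      refine Fintype.sum_equiv (Equiv.mulRight (⟨g, hg⟩ : G)) _ _ fun h => ?_
      simp only [Equiv.coe_mulRight]
      congr 1
      rw [Matrix.mulVec_mulVec]
      rfl
    have hv : eval v Q = 0 := by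
      rw [hevalQ]
      have : ∀ g : G, eval (((g : GL (Fin n) k) : Matrix (Fin n) (Fin n) k).mulVec v) P
          = 0 := fun g => hPA _ (Finset.mem_image.mpr ⟨g, Finset.mem_univ _, rfl⟩)
      simp [this]
    have hw : eval w Q = 1 := by
      rw [hevalQ]
      have : ∀ g : G, eval (((g : GL (Fin n) k) : Matrix (Fin n) (Fin n) k).mulVec w) P
          = 1 := fun g => hPB _ (Finset.mem_image.mpr ⟨g, Finset.mem_univ _, rfl⟩)
      rw [Finset.sum_congr rfl fun g _ => this g]
      simp only [Finset.sum_const, Finset.card_univ, nsmul_eq_mul, mul_one]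
      rw [inv_mul_cancel₀]
      exact_mod_cast Fintype.card_ne_zero
    rw [hinv Q hQinv, hw] at hv
    exact one_ne_zero hv
  · rintro ⟨g, hg, rfl⟩ P hP
    exact (hP g hg v).symm
end

section
/- Finite generation of invariants of a compact linear group (Hilbert): let n be a natural number and G a subgroup of the general linear group GL (Fin n) ℝ whose image in Matrix (Fin n) (Fin n) ℝ is a compact set. Then the subalgebra of G-invariant polynomials, Inv = {P : MvPolynomial (Fin n) ℝ | ∀ g ∈ G, ∀ x : Fin n → ℝ, eval ((g : Matrix (Fin n) (Fin n) ℝ).mulVec x) P = eval x P}, is a finitely generated ℝ-subalgebra of MvPolynomial (Fin n) ℝ (i.e. Inv.FG holds). -/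
open Matrix MvPolynomial

/-- The `ℝ`-subalgebra of `G`-invariant polynomials in `n` variables, for a
subgroup `G` of `GL (Fin n) ℝ` acting by matrix-vector multiplication. -/
noncomputable def invariantSubalgebra {n : ℕ} (G : Subgroup (GL (Fin n) ℝ)) :
    Subalgebra ℝ (MvPolynomial (Fin n) ℝ) where
  carrier := {P | ∀ g ∈ G, ∀ x : Fin n → ℝ,
    eval ((g : Matrix (Fin n) (Fin n) ℝ).mulVec x) P = eval x P}
  add_mem' := by
    intro P Q hP hQ g hg x
    simp only [map_add, hP g hg x, hQ g hg x]
  mul_mem' := by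
    intro P Q hP hQ g hg x
    simp only [_root_.map_mul, hP g hg x, hQ g hg x]
  algebraMap_mem' := by
    intro c g hg x
    simp [MvPolynomial.algebraMap_eq]

/-!
The ideal of `ℝ[x₁, …, xₙ]` generated by the homogeneous invariants of positive degree is
finitely generated, say by homogeneous invariants `t₁, …, tₘ`; these generate
the algebra of invariants. Averaging over `G` against its Haar probability measure (which exists
because `G` is compact) gives the Reynolds operator `R`, a retraction onto the invariants that is
linear over them. So a homogeneous invariant `p = ∑ fᵢ tᵢ` of positive degree equals
`∑ R(fᵢ) tᵢ`, and taking homogeneous components writes it as a combination of the `tᵢ` with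
invariant coefficients of lower degree; induct on the degree.
-/

namespace MvPolynomial

variable {σ τ R : Type*} [CommSemiring R]

lemma homogeneousComponent_mul_of_isHomogeneous (q : MvPolynomial σ R) {r : MvPolynomial σ R}
    {e : ℕ} (hr : r.IsHomogeneous e) (d : ℕ) :
    homogeneousComponent d (q * r) = if e ≤ d then homogeneousComponent (d - e) q * r else 0 := by
  induction q using MvPolynomial.induction_on' with
  | monomial a c =>
    have ha := isHomogeneous_monomial c (rfl : a.degree = a.degree)
    rw [homogeneousComponent_of_mem (ha.mul hr), homogeneousComponent_of_mem ha]
    split_ifs <;> first | rfl | (exfalso; omega)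
  | add p q hp hq => split_ifs at hp hq ⊢ <;> simp only [add_mul, map_add, hp, hq, add_zero]

lemma bind₁_homogeneousComponent {g : σ → MvPolynomial τ R} (hg : ∀ i, (g i).IsHomogeneous 1)
    (k : ℕ) (p : MvPolynomial σ R) :
    bind₁ g (homogeneousComponent k p) = homogeneousComponent k (bind₁ g p) := by
  induction p using MvPolynomial.induction_on' with
  | monomial d c =>
    have hd : (bind₁ g (monomial d c)).IsHomogeneous d.degree := by
      simpa using (isHomogeneous_monomial c rfl).aeval g hg
    rw [homogeneousComponent_of_mem (isHomogeneous_monomial c rfl), homogeneousComponent_of_mem hd]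
    split_ifs <;> simp
  | add p q hp hq => simp only [map_add, hp, hq]

lemma coeff_bind₁_eq_zero_of_totalDegree_lt {g : σ → MvPolynomial τ R}
    (hg : ∀ i, (g i).IsHomogeneous 1) {p : MvPolynomial σ R} {e : τ →₀ ℕ}
    (he : p.totalDegree < e.degree) : coeff e (bind₁ g p) = 0 :=
  calc coeff e (bind₁ g p) = coeff e (homogeneousComponent e.degree (bind₁ g p)) := by
        rw [coeff_homogeneousComponent, if_pos rfl]
    _ = 0 := by
        rw [← bind₁_homogeneousComponent hg, homogeneousComponent_eq_zero _ _ he, map_zero,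
          coeff_zero]

lemma eval_eq_sum_of_support_subset (x : σ → R) {p : MvPolynomial σ R} {D : Finset (σ →₀ ℕ)}
    (hD : p.support ⊆ D) : eval x p = ∑ e ∈ D, coeff e p * ∏ i ∈ e.support, x i ^ e i := by
  rw [eval_eq]
  exact Finset.sum_subset hD fun e _ he => by rw [notMem_support_iff.1 he, zero_mul]

end MvPolynomial

namespace Matrix

variable {σ R : Type*} [Fintype σ] [CommSemiring R]

lemma eval_bind₁_toMvPolynomial (M : Matrix σ σ R) (x : σ → R) (p : MvPolynomial σ R) :
    eval x (bind₁ M.toMvPolynomial p) = eval (M *ᵥ x) p := by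
  simp only [eval, eval₂Hom_bind₁, coe_eval₂Hom]
  congr
  ext i
  exact toMvPolynomial_eval_eq_apply M i x

lemma continuous_coeff_bind₁_toMvPolynomial [TopologicalSpace R] [IsTopologicalSemiring R]
    (p : MvPolynomial σ R) (e : σ →₀ ℕ) :
    Continuous fun M : Matrix σ σ R => coeff e (bind₁ M.toMvPolynomial p) := by
  classical
  induction p using MvPolynomial.induction_on generalizing e with
  | C c => simpa using continuous_const
  | add p q hp hq =>
    simp only [map_add, coeff_add]
    exact (hp e).add (hq e)
  | mul_X p i hp =>
    have hX : ∀ d, Continuous fun M : Matrix σ σ R => coeff d (M.toMvPolynomial i) := by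
      intro d
      simp only [toMvPolynomial, coeff_sum, coeff_monomial]
      exact continuous_finsetSum _ fun j _ => by split_ifs <;> fun_prop
    simp only [_root_.map_mul, bind₁_X_right, coeff_mul]
    exact continuous_finsetSum _ fun d _ => (hp d.1).mul (hX d.2)

lemma GeneralLinearGroup.isEmbedding_val {K : Type*} [DecidableEq σ] [Field K]
    [TopologicalSpace K] [IsTopologicalDivisionRing K] :
    Topology.IsEmbedding (Units.val : GL σ K → Matrix σ σ K) := by
  refine Units.isEmbedding_val_mk' (f := Inv.inv) (fun M hM => ?_) fun u => (coe_units_inv u).symm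
  have hdet : M.det ≠ 0 := ((isUnit_iff_isUnit_det M).1 hM).ne_zero
  have hinv : ContinuousAt Ring.inverse M.det := by
    simpa only [Ring.inverse_eq_inv'] using continuousAt_inv₀ hdet
  exact (continuousAt_matrix_inv M hinv).continuousWithinAt

end Matrix

namespace Subalgebra

variable {k A : Type*} [CommSemiring k] [CommSemiring A] [Algebra k A] {S : Subalgebra k A}

lemma exists_sum_mul_of_mem_ideal_span_of_retraction (R : A →ₗ[S] S) (hR : ∀ s : S, R s = s)
    {T : Finset A} (hTS : ∀ t ∈ T, t ∈ S) {p : A} (hpS : p ∈ S)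
    (hp : p ∈ Ideal.span (T : Set A)) : ∃ f : A → A, (∀ t, f t ∈ S) ∧ p = ∑ t ∈ T, f t * t := by
  obtain ⟨f, -, hf⟩ := Submodule.mem_span_finset.1 hp
  refine ⟨fun a => R (f a), fun a => (R (f a)).2, ?_⟩
  have hmul : ∀ t ∈ T, (R (f t * t) : A) = R (f t) * t := fun t ht => by
    rw [mul_comm, ← smul_eq_mul, ← Subalgebra.smul_def (⟨t, hTS t ht⟩ : S), R.map_smul,
      smul_eq_mul, Subalgebra.coe_mul, mul_comm]
  calc p = R p := congrArg Subtype.val (hR ⟨p, hpS⟩).symm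
    _ = ∑ t ∈ T, (R (f t * t) : A) := by
      simp only [← hf, smul_eq_mul, map_sum, AddSubmonoidClass.coe_finsetSum]
    _ = ∑ t ∈ T, R (f t) * t := Finset.sum_congr rfl hmul

end Subalgebra

namespace MvPolynomial

variable {σ k : Type*} [CommSemiring k] {S : Subalgebra k (MvPolynomial σ k)}

lemma mem_adjoin_of_isHomogeneous_of_retraction
    (hS : ∀ p ∈ S, ∀ d, homogeneousComponent d p ∈ S) (R : MvPolynomial σ k →ₗ[S] S)
    (hR : ∀ s : S, R s = s) {T : Finset (MvPolynomial σ k)}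
    (hTS : ∀ t ∈ T, t ∈ S ∧ ∃ e, 0 < e ∧ t.IsHomogeneous e)
    (hT : ∀ p ∈ S, ∀ d, 0 < d → p.IsHomogeneous d → p ∈ Ideal.span (T : Set (MvPolynomial σ k)))
    (d : ℕ) {p : MvPolynomial σ k} (hpS : p ∈ S) (hp : p.IsHomogeneous d) :
    p ∈ Algebra.adjoin k (T : Set (MvPolynomial σ k)) := by
  induction d using Nat.strong_induction_on generalizing p with
  | _ d ih =>
  rcases Nat.eq_zero_or_pos d with rfl | hd
  · rw [← homogeneousComponent_eq_self hp, homogeneousComponent_zero, ← algebraMap_eq]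
    exact Subalgebra.algebraMap_mem _ _
  obtain ⟨f, hfS, rfl⟩ := Subalgebra.exists_sum_mul_of_mem_ideal_span_of_retraction R hR
    (fun t ht => (hTS t ht).1) hpS (hT p hpS d hd hp)
  rw [← homogeneousComponent_eq_self hp, map_sum]
  refine Subalgebra.sum_mem _ fun t ht => ?_
  obtain ⟨e, he, hte⟩ := (hTS t ht).2
  rw [homogeneousComponent_mul_of_isHomogeneous _ hte]
  split_ifs
  · exact mul_mem (ih (d - e) (by omega) (hS _ (hfS t) _) (homogeneousComponent_isHomogeneous _ _))
      (Algebra.subset_adjoin ht)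
  · exact zero_mem _

end MvPolynomial

open MvPolynomial in
theorem Subalgebra.fg_of_homogeneousComponent_mem_of_retraction {σ k : Type*} [CommRing k]
    [IsNoetherianRing k] [Finite σ] {S : Subalgebra k (MvPolynomial σ k)}
    (hS : ∀ p ∈ S, ∀ d, homogeneousComponent d p ∈ S) (R : MvPolynomial σ k →ₗ[S] S)
    (hR : ∀ s : S, R s = s) : S.FG := by
  set B := {q | q ∈ S ∧ ∃ e, 0 < e ∧ q.IsHomogeneous e}
  obtain ⟨T, hTB, hT⟩ :=
    (Submodule.fg_span_iff_fg_span_finset_subset B).1 (IsNoetherian.noetherian (Ideal.span B))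
  have hspan : ∀ p ∈ S, ∀ d, 0 < d → p.IsHomogeneous d → p ∈ Ideal.span (T : Set _) :=
    fun p hpS d hd hp => by rw [Ideal.span, ← hT]; exact Submodule.subset_span ⟨hpS, d, hd, hp⟩
  refine ⟨T, le_antisymm (Algebra.adjoin_le fun t ht => (hTB ht).1) fun p hp => ?_⟩
  rw [← sum_homogeneousComponent p]
  exact Subalgebra.sum_mem _ fun d _ => mem_adjoin_of_isHomogeneous_of_retraction hS R hR hTB
    hspan d (hS p hp d) (homogeneousComponent_isHomogeneous d p)

section Invariants

variable {n : ℕ} {G : Subgroup (GL (Fin n) ℝ)}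

lemma bind₁_toMvPolynomial_of_mem_invariantSubalgebra {p : MvPolynomial (Fin n) ℝ}
    (hp : p ∈ invariantSubalgebra G) {g : GL (Fin n) ℝ} (hg : g ∈ G) :
    bind₁ (g : Matrix (Fin n) (Fin n) ℝ).toMvPolynomial p = p :=
  MvPolynomial.funext fun x => by rw [eval_bind₁_toMvPolynomial]; exact hp g hg x

lemma homogeneousComponent_mem_invariantSubalgebra {p : MvPolynomial (Fin n) ℝ}
    (hp : p ∈ invariantSubalgebra G) (d : ℕ) :
    homogeneousComponent d p ∈ invariantSubalgebra G := by
  intro g hg x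
  rw [← eval_bind₁_toMvPolynomial, bind₁_homogeneousComponent (toMvPolynomial_isHomogeneous _),
    bind₁_toMvPolynomial_of_mem_invariantSubalgebra hp hg]

end Invariants

section Reynolds

open MeasureTheory

variable {n : ℕ} {K : Type*} [Group K] [TopologicalSpace K] [IsTopologicalGroup K]
  [CompactSpace K] [MeasurableSpace K] [BorelSpace K] (ρ : K →* GL (Fin n) ℝ) (μ : Measure K)

/-- `∫ g • p ∂μ` with `(g • p)(x) = p(ρ g⁻¹ x)`, integrated coefficientwise; only exponents of
degree at most `p.totalDegree` occur, since `g • p` has no monomials of higher degree. -/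
noncomputable def reynolds (p : MvPolynomial (Fin n) ℝ) : MvPolynomial (Fin n) ℝ :=
  ∑ e ∈ (Finsupp.finite_of_degree_le p.totalDegree).toFinset,
    monomial e (∫ g, coeff e (bind₁ (ρ g⁻¹ : Matrix (Fin n) (Fin n) ℝ).toMvPolynomial p) ∂μ)

variable {ρ}

lemma integrable_eval_mulVec [IsFiniteMeasure μ] (hρ : Continuous ρ) (p : MvPolynomial (Fin n) ℝ)
    (x : Fin n → ℝ) : Integrable (fun g => eval ((ρ g⁻¹ : Matrix (Fin n) (Fin n) ℝ) *ᵥ x) p) μ :=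
  ((continuous_eval p).comp ((Units.continuous_val.comp (hρ.comp continuous_inv)).matrix_mulVec
    continuous_const)).integrable_of_hasCompactSupport (.of_compactSpace _)

lemma integrable_coeff_bind₁_toMvPolynomial [IsFiniteMeasure μ] (hρ : Continuous ρ)
    (p : MvPolynomial (Fin n) ℝ) (e : Fin n →₀ ℕ) :
    Integrable (fun g => coeff e (bind₁ (ρ g⁻¹ : Matrix (Fin n) (Fin n) ℝ).toMvPolynomial p)) μ :=
  ((continuous_coeff_bind₁_toMvPolynomial p e).comp (Units.continuous_val.comp
    (hρ.comp continuous_inv))).integrable_of_hasCompactSupport (.of_compactSpace _)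

lemma eval_reynolds [IsFiniteMeasure μ] (hρ : Continuous ρ) (p : MvPolynomial (Fin n) ℝ)
    (x : Fin n → ℝ) :
    eval x (reynolds ρ μ p) = ∫ g, eval ((ρ g⁻¹ : Matrix (Fin n) (Fin n) ℝ) *ᵥ x) p ∂μ := by
  set D := (Finsupp.finite_of_degree_le (σ := Fin n) p.totalDegree).toFinset
  have hsupp : ∀ g, (bind₁ (ρ g⁻¹ : Matrix (Fin n) (Fin n) ℝ).toMvPolynomial p).support ⊆ D :=
    fun g e he => by
      by_contra hD
      simp only [D, Set.Finite.mem_toFinset, Set.mem_ofPred_eq, not_le] at hD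
      exact mem_support_iff.1 he
        (coeff_bind₁_eq_zero_of_totalDegree_lt (toMvPolynomial_isHomogeneous _) hD)
  simp only [reynolds, map_sum, eval_monomial, ← integral_mul_const, ← eval_bind₁_toMvPolynomial,
    ← integral_finsetSum _ fun e _ => (integrable_coeff_bind₁_toMvPolynomial μ hρ p e).mul_const _,
    eval_eq_sum_of_support_subset x (hsupp _)]
  rfl

lemma reynolds_mem_invariantSubalgebra [IsFiniteMeasure μ] [μ.IsMulLeftInvariant]
    (hρ : Continuous ρ) (p : MvPolynomial (Fin n) ℝ) :
    reynolds ρ μ p ∈ invariantSubalgebra ρ.range := by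
  rintro _ ⟨k, rfl⟩ x
  have hmul : ∀ g, (ρ g⁻¹ : Matrix (Fin n) (Fin n) ℝ) * ρ k = ρ (k⁻¹ * g)⁻¹ := fun g => by
    rw [← Units.val_mul, ← map_mul, _root_.mul_inv_rev, inv_inv]
  simp only [eval_reynolds μ hρ, mulVec_mulVec, hmul]
  exact integral_mul_left_eq_self (fun g => eval ((ρ g⁻¹ : Matrix (Fin n) (Fin n) ℝ) *ᵥ x) p) k⁻¹

lemma reynolds_add [IsFiniteMeasure μ] (hρ : Continuous ρ) (p q : MvPolynomial (Fin n) ℝ) :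
    reynolds ρ μ (p + q) = reynolds ρ μ p + reynolds ρ μ q :=
  MvPolynomial.funext fun x => by
    simp only [map_add, eval_reynolds μ hρ,
      integral_add (integrable_eval_mulVec μ hρ p x) (integrable_eval_mulVec μ hρ q x)]

lemma reynolds_mul_of_mem [IsFiniteMeasure μ] (hρ : Continuous ρ) {q : MvPolynomial (Fin n) ℝ}
    (hq : q ∈ invariantSubalgebra ρ.range) (p : MvPolynomial (Fin n) ℝ) :
    reynolds ρ μ (q * p) = q * reynolds ρ μ p :=
  MvPolynomial.funext fun x => by
    have hqx : ∀ g, eval ((ρ g⁻¹ : Matrix (Fin n) (Fin n) ℝ) *ᵥ x) q = eval x q :=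
      fun g => hq _ ⟨g⁻¹, rfl⟩ x
    simp only [_root_.map_mul, eval_reynolds μ hρ, hqx, integral_const_mul]

lemma reynolds_of_mem [IsProbabilityMeasure μ] (hρ : Continuous ρ) {p : MvPolynomial (Fin n) ℝ}
    (hp : p ∈ invariantSubalgebra ρ.range) : reynolds ρ μ p = p :=
  MvPolynomial.funext fun x => by
    have hpx : ∀ g, eval ((ρ g⁻¹ : Matrix (Fin n) (Fin n) ℝ) *ᵥ x) p = eval x p :=
      fun g => hp _ ⟨g⁻¹, rfl⟩ x
    simp only [eval_reynolds μ hρ, hpx, integral_const, probReal_univ, one_smul]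

noncomputable def reynoldsLinearMap [IsFiniteMeasure μ] [μ.IsMulLeftInvariant]
    (hρ : Continuous ρ) :
    MvPolynomial (Fin n) ℝ →ₗ[invariantSubalgebra ρ.range] invariantSubalgebra ρ.range where
  toFun p := ⟨reynolds ρ μ p, reynolds_mem_invariantSubalgebra μ hρ p⟩
  map_add' p q := Subtype.ext (reynolds_add μ hρ p q)
  map_smul' q p := Subtype.ext (reynolds_mul_of_mem μ hρ q.2 p)

end Reynolds

open MeasureTheory in
/-- Hilbert's finiteness theorem for compact linear groups: if `G` is a
subgroup of `GL (Fin n) ℝ` whose set of matrices is compact, then the algebra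
of `G`-invariant polynomials is a finitely generated `ℝ`-subalgebra. -/
theorem invariantSubalgebra_fg_of_isCompact {n : ℕ} (G : Subgroup (GL (Fin n) ℝ))
    (hG : IsCompact {M : Matrix (Fin n) (Fin n) ℝ |
      ∃ g ∈ G, (g : Matrix (Fin n) (Fin n) ℝ) = M}) :
    (invariantSubalgebra G).FG := by
  have : CompactSpace G :=
    isCompact_iff_compactSpace.1 (GeneralLinearGroup.isEmbedding_val.isCompact_iff.2 hG)
  let _ : MeasurableSpace G := borel G
  have : BorelSpace G := ⟨rfl⟩
  let μ : Measure G := Measure.haarMeasure ⊤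
  have : IsProbabilityMeasure μ := ⟨Measure.haarMeasure_self⟩
  have hρ : Continuous G.subtype := continuous_subtype_val
  rw [← G.range_subtype]
  exact Subalgebra.fg_of_homogeneousComponent_mem_of_retraction
    (fun p hp d => homogeneousComponent_mem_invariantSubalgebra hp d) (reynoldsLinearMap μ hρ)
    fun p => Subtype.ext (reynolds_of_mem μ hρ p.2)
end

section
/- Invariant polynomials of a compact linear group separate orbits of the diagonal action: let n be a natural number and G a subgroup of GL (Fin n) ℝ whose image in Matrix (Fin n) (Fin n) ℝ is a compact set, acting diagonally on m-tuples of vectors. Then for all v, w : Fin m → (Fin n → ℝ), the following are equivalent: (1) for every polynomial P : MvPolynomial (Fin m × Fin n) ℝ invariant under the diagonal action (i.e. for all g ∈ G and all x : Fin m → (Fin n → ℝ), eval (fun p ↦ ((g : Matrix (Fin n) (Fin n) ℝ).mulVec (x p.1)) p.2) P = eval (fun p ↦ x p.1 p.2) P), one has eval (fun p ↦ v p.1 p.2) P = eval (fun p ↦ w p.1 p.2) P; (2) there exists g ∈ G with (g : Matrix (Fin n) (Fin n) ℝ).mulVec (v i) = w i for all i. -/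
/-!
Suppose no element of `G` maps `v` to `w`. The orbits `G v` and `G w` are then disjoint compact
sets, so by Urysohn and Stone–Weierstrass some polynomial `P` satisfies `P a + 1/2 ≤ P b` for all
`a ∈ G v`, `b ∈ G w`. Averaging `x ↦ P (g x)` against Haar measure of the compact group `G` yields
a `G`-invariant function still separating `v` from `w`; it is again a polynomial because the
coefficients of `P (g x)` depend continuously on `g` and lie in a support independent of `g`.
-/

open Matrix MvPolynomial MeasureTheory
open Function (uncurry)

theorem MvPolynomial.exists_add_half_le_of_isCompact_of_disjoint {σ : Type*}
    {A B : Set (σ → ℝ)} (hA : IsCompact A) (hB : IsCompact B) (hAB : Disjoint A B) :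
    ∃ P : MvPolynomial σ ℝ, ∀ a ∈ A, ∀ b ∈ B, eval a P + 1 / 2 ≤ eval b P := by
  let K := A ∪ B
  have : CompactSpace K := isCompact_iff_compactSpace.mp (hA.union hB)
  obtain ⟨f, hfA, hfB, -⟩ := exists_continuous_zero_one_of_isClosed
    (hA.isClosed.preimage continuous_subtype_val) (hB.isClosed.preimage continuous_subtype_val)
    (hAB.preimage (Subtype.val : K → σ → ℝ))
  let evalOn : MvPolynomial σ ℝ →ₐ[ℝ] C(K, ℝ) :=
    aeval fun i => ⟨fun y => (y : σ → ℝ) i, (continuous_apply i).comp continuous_subtype_val⟩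
  have evalOn_apply (P : MvPolynomial σ ℝ) (y : K) : evalOn P y = eval (y : σ → ℝ) P := by
    rw [← ContinuousMap.evalAlgHom_apply (S := ℝ), ← AlgHom.comp_apply, comp_aeval]
    rfl
  have hsep : evalOn.range.SeparatesPoints := by
    rintro y z hyz
    obtain ⟨i, hi⟩ := Function.ne_iff.mp (Subtype.coe_ne_coe.mpr hyz)
    exact ⟨_, ⟨evalOn (X i), ⟨X i, rfl⟩, rfl⟩, by simpa [evalOn_apply] using hi⟩
  obtain ⟨⟨_, P, rfl⟩, hP⟩ :=
    ContinuousMap.exists_mem_subalgebra_near_continuousMap_of_separatesPoints _ hsep f (1 / 4)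
      (by norm_num)
  have hnear (y : σ → ℝ) (hy : y ∈ K) : |eval y P - f ⟨y, hy⟩| < 1 / 4 := by
    rw [← evalOn_apply P ⟨y, hy⟩, ← Real.norm_eq_abs]
    exact (ContinuousMap.norm_coe_le_norm _ _).trans_lt hP
  refine ⟨P, fun a ha b hb => ?_⟩
  have ha' := hnear a (.inl ha)
  have hb' := hnear b (.inr hb)
  rw [hfA ha, Pi.zero_apply] at ha'
  rw [hfB hb, Pi.one_apply] at hb'
  rw [abs_lt] at ha' hb'
  linarith [ha'.2, hb'.1]

theorem MvPolynomial.exists_eval_eq_integral_eval_map {σ τ H : Type*} [MeasurableSpace H]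
    (μ : Measure H) (q : MvPolynomial σ (MvPolynomial τ ℝ)) (y : H → τ → ℝ)
    (hy : ∀ α, Integrable (fun g => eval (y g) (q.coeff α)) μ) :
    ∃ Q : MvPolynomial σ ℝ, ∀ x, eval x Q = ∫ g, eval x (map (eval (y g)) q) ∂μ := by
  refine ⟨∑ α ∈ q.support, monomial α (∫ g, eval (y g) (q.coeff α) ∂μ), fun x => ?_⟩
  simp_rw [eval_map, eval₂_eq, map_sum, eval_monomial, ← integral_mul_const]
  exact (integral_finsetSum _ fun α _ => (hy α).mul_const _).symm

section MulVec

variable {ι κ : Type*} [Fintype κ]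

/-- `P (M x)` as a polynomial in `x` whose coefficients are polynomials in the entries of `M`. -/
noncomputable def genericMulVecSubst (P : MvPolynomial (ι × κ) ℝ) :
    MvPolynomial (ι × κ) (MvPolynomial (κ × κ) ℝ) :=
  bind₁ (fun p => ∑ k, C (X (p.2, k)) * X (p.1, k)) (map C P)

theorem eval_map_genericMulVecSubst (M : Matrix κ κ ℝ) (x : ι → κ → ℝ)
    (P : MvPolynomial (ι × κ) ℝ) :
    eval (uncurry x) (map (eval (uncurry M)) (genericMulVecSubst P)) =
      eval (uncurry fun i => M *ᵥ x i) P := by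
  rw [eval_map, genericMulVecSubst, ← coe_eval₂Hom, eval₂Hom_bind₁, coe_eval₂Hom, eval₂_map]
  congr 1
  · ext r
    simp
  · ext p
    simp [uncurry, mulVec, dotProduct, mul_comm]

theorem exists_eval_eq_integral_eval_mulVec {H : Type*} [TopologicalSpace H] [CompactSpace H]
    [MeasurableSpace H] [OpensMeasurableSpace H] (μ : Measure H) [IsFiniteMeasure μ]
    {ρ : H → Matrix κ κ ℝ} (hρ : Continuous ρ) (P : MvPolynomial (ι × κ) ℝ) :
    ∃ Q : MvPolynomial (ι × κ) ℝ, ∀ x : ι → κ → ℝ,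
      eval (uncurry x) Q = ∫ g, eval (uncurry fun i => ρ g *ᵥ x i) P ∂μ := by
  have hcont (c : MvPolynomial (κ × κ) ℝ) : Continuous fun g => eval (uncurry (ρ g)) c :=
    (continuous_eval c).comp (by fun_prop)
  obtain ⟨Q, hQ⟩ := (genericMulVecSubst P).exists_eval_eq_integral_eval_map μ
    (fun g => uncurry (ρ g)) fun α =>
      (hcont _).integrable_of_hasCompactSupport (.of_compactSpace _)
  exact ⟨Q, fun x => by simp_rw [hQ, eval_map_genericMulVecSubst]⟩

variable [DecidableEq κ]

theorem exists_invariant_polynomial_eval_ne (G : Subgroup (GL κ ℝ)) [CompactSpace G]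
    {v w : ι → κ → ℝ} (hvw : ¬ ∃ g ∈ G, ∀ i, (g : Matrix κ κ ℝ) *ᵥ v i = w i) :
    ∃ Q : MvPolynomial (ι × κ) ℝ,
      (∀ g ∈ G, ∀ x : ι → κ → ℝ,
        eval (uncurry fun i => (g : Matrix κ κ ℝ) *ᵥ x i) Q = eval (uncurry x) Q) ∧
      eval (uncurry v) Q ≠ eval (uncurry w) Q := by
  -- averaging over `g⁻¹` rather than `g` lets left invariance of Haar measure give invariance
  let ρ : G → Matrix κ κ ℝ := fun g => ((g⁻¹ : G) : GL κ ℝ)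
  have hρ : Continuous ρ := Units.continuous_val.comp (continuous_subtype_val.comp continuous_inv)
  let orbit (x : ι → κ → ℝ) : Set (ι × κ → ℝ) := Set.range fun g => uncurry fun i => ρ g *ᵥ x i
  have hdisj : Disjoint (orbit v) (orbit w) := by
    rw [Set.disjoint_left]
    rintro _ ⟨a, rfl⟩ ⟨b, hba⟩
    refine hvw ⟨_, (b * a⁻¹).2, fun i => ?_⟩
    calc (((b * a⁻¹ : G) : GL κ ℝ) : Matrix κ κ ℝ) *ᵥ v i
        = ((b : GL κ ℝ) : Matrix κ κ ℝ) *ᵥ (ρ a *ᵥ v i) := by simp [ρ, mulVec_mulVec]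
      _ = ((b : GL κ ℝ) : Matrix κ κ ℝ) *ᵥ (ρ b *ᵥ w i) := by
          rw [congrFun (Function.uncurry_injective hba) i]
      _ = w i := by simp [ρ, mulVec_mulVec]
  obtain ⟨P, hP⟩ := exists_add_half_le_of_isCompact_of_disjoint
    (isCompact_range (by fun_prop)) (isCompact_range (by fun_prop)) hdisj
  let _ : MeasurableSpace G := borel G
  have _ : BorelSpace G := ⟨rfl⟩
  let μ : Measure G := Measure.haar
  obtain ⟨Q, hQ⟩ := exists_eval_eq_integral_eval_mulVec (ι := ι) μ hρ P
  have hint (x : ι → κ → ℝ) : Integrable (fun g => eval (uncurry fun i => ρ g *ᵥ x i) P) μ :=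
    ((continuous_eval P).comp (by fun_prop)).integrable_of_hasCompactSupport (.of_compactSpace _)
  refine ⟨Q, fun h hh x => ?_, fun hQvw => ?_⟩
  · have hρh (g : G) : ρ g * h = ρ (⟨h, hh⟩⁻¹ * g) := by
      simp only [ρ, _root_.mul_inv_rev, inv_inv, Subgroup.coe_mul, Units.val_mul]
    simp_rw [hQ, mulVec_mulVec, hρh]
    exact integral_mul_left_eq_self (fun g => eval (uncurry fun i => ρ g *ᵥ x i) P) _
  · have hgap : eval (uncurry v) Q + μ.real Set.univ * (1 / 2) ≤ eval (uncurry w) Q := by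
      rw [hQ, hQ, ← smul_eq_mul, ← integral_const, ← integral_add (hint v) (integrable_const _)]
      exact integral_mono ((hint v).add (integrable_const _)) (hint w)
        fun g => hP _ ⟨g, rfl⟩ _ ⟨g, rfl⟩
    linarith [measureReal_univ_pos (μ := μ)]

end MulVec

/-- Invariant polynomials of a compact linear group separate the orbits of the
diagonal action on `m`-tuples of vectors: two tuples `v, w` have the same value
under every polynomial invariant under the diagonal `G`-action iff a single
element of `G` maps `v` to `w`. -/
theorem compact_group_invariants_separate_orbits {n m : ℕ}
    (G : Subgroup (GL (Fin n) ℝ))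
    (hG : IsCompact {M : Matrix (Fin n) (Fin n) ℝ |
      ∃ g ∈ G, (g : Matrix (Fin n) (Fin n) ℝ) = M})
    (v w : Fin m → (Fin n → ℝ)) :
    (∀ P : MvPolynomial (Fin m × Fin n) ℝ,
      (∀ g ∈ G, ∀ x : Fin m → (Fin n → ℝ),
        eval (fun p => ((g : Matrix (Fin n) (Fin n) ℝ).mulVec (x p.1)) p.2) P =
          eval (fun p => x p.1 p.2) P) →
      eval (fun p => v p.1 p.2) P = eval (fun p => w p.1 p.2) P)
    ↔ ∃ g ∈ G, ∀ i, (g : Matrix (Fin n) (Fin n) ℝ).mulVec (v i) = w i := by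
  have : CompactSpace G :=
    isCompact_iff_compactSpace.mp (G.units_ofUnits_eq ▸ Submonoid.units_isCompact hG)
  refine ⟨fun hsep => ?_, fun ⟨g, hg, hgvw⟩ P hP => ?_⟩
  · by_contra hvw
    obtain ⟨Q, hQinv, hQne⟩ := exists_invariant_polynomial_eval_ne G hvw
    exact hQne (hsep Q hQinv)
  · rw [← hP g hg v]
    simp_rw [hgvw]
end
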